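/- Let 0 ≤ i ≤ r−2 and 0 ≤ j ≤ r−2, and define g(λ) = ({rλ}/{λ}) · ( q^{(r−1−i)λ} + q^{−(r−1−i)λ} ) (the scalar by which the open Hopf link colored by the projective module P_i acts on V_λ). Then as ε → 0 through nonzero complex values: (i) g(1+j−r+ε) → 0 and g(r−1−j+ε) → 0; (ii) (−1/([1+j][ε])) · ( g(r−1−j+ε) − g(1+j−r+ε) ) tends to (2r(−1)^{i}/[j+1]²) · ( q^{(i+1)(j+1)} + q^{−(i+1)(j+1)} ). Thus the open Hopf link Φ_{P_i, P_j} on the projective cover P_j is purely nilpotent, with nilpotent coefficient b_{P_i} = 2r(−1)^{i} ( q^{(i+1)(j+1)} + q^{−(i+1)(j+1)} )/[j+1]². -/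

import Mathlib

/-- `q^z = exp(iπz/r)` for `q = exp(iπ/r)`. -/
noncomputable def qexp (r : ℕ) (z : ℂ) : ℂ := Complex.exp (Real.pi * Complex.I * z / r)

/-- The quantum bracket `{z} = q^z - q^{-z}`. -/
noncomputable def qbr (r : ℕ) (z : ℂ) : ℂ := qexp r z - qexp r (-z)

/-- The quantum number `[z] = {z}/{1}`. -/
noncomputable def qnum (r : ℕ) (z : ℂ) : ℂ := qbr r z / qbr r 1

/-- The scalar by which the open Hopf link colored by the projective module `P_i` acts on `V_λ`. -/
noncomputable def gP (r i : ℕ) (lam : ℂ) : ℂ :=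
  (qbr r ((r : ℂ) * lam) / qbr r lam)
    * (qexp r (((r : ℂ) - 1 - (i : ℂ)) * lam) + qexp r (-(((r : ℂ) - 1 - (i : ℂ)) * lam)))


open Complex Filter

lemma qexp_add (r : ℕ) (x y : ℂ) : qexp r (x + y) = qexp r x * qexp r y := by
  rw [qexp, qexp, qexp, ← Complex.exp_add]; congr 1; ring

lemma qexp_ne_zero (r : ℕ) (x : ℂ) : qexp r x ≠ 0 := Complex.exp_ne_zero _

lemma qexp_mul_neg (r : ℕ) (x : ℂ) : qexp r x * qexp r (-x) = 1 := by
  rw [← qexp_add]; simp [qexp]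

lemma continuous_qexp (r : ℕ) : Continuous (qexp r) := by
  unfold qexp; fun_prop

lemma continuous_qbr (r : ℕ) : Continuous (qbr r) := by
  unfold qbr qexp; fun_prop

lemma qexp_r_mul (r : ℕ) (hr : (r : ℂ) ≠ 0) (z : ℂ) :
    qexp r ((r : ℂ) * z) = Complex.exp (Real.pi * Complex.I * z) := by
  rw [qexp]; congr 1; field_simp

lemma qexp_r_int (r : ℕ) (hr : (r : ℂ) ≠ 0) (n : ℤ) :
    qexp r ((r : ℂ) * (n : ℂ)) = (-1 : ℂ) ^ n := by
  rw [qexp_r_mul r hr,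
    show (Real.pi : ℂ) * Complex.I * (n : ℂ) = (n : ℂ) * (Real.pi * Complex.I) by ring,
    Complex.exp_int_mul, Complex.exp_pi_mul_I]

lemma qbr_zero (r : ℕ) : qbr r 0 = 0 := by simp [qbr]

lemma qbr_neg (r : ℕ) (z : ℂ) : qbr r (-z) = -qbr r z := by
  simp [qbr]

lemma qbr_eq_zero {r : ℕ} (hr : (r : ℂ) ≠ 0) {z : ℂ} (h : qbr r z = 0) :
    ∃ n : ℤ, z = n * r := by
  rw [qbr, sub_eq_zero, qexp, qexp, Complex.exp_eq_exp_iff_exists_int] at h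
  obtain ⟨n, hn⟩ := h
  refine ⟨n, ?_⟩
  have hπ : (Real.pi : ℂ) ≠ 0 := Complex.ofReal_ne_zero.2 Real.pi_ne_zero
  have h2 : 2 * (Real.pi : ℂ) * Complex.I ≠ 0 := by
    simp [hπ, Complex.I_ne_zero]
  field_simp at hn
  apply mul_left_cancel₀ h2
  linear_combination (↑Real.pi * Complex.I) * hn

lemma qbr_nat_ne_zero {r s : ℕ} (hs : 0 < s) (hsr : s < r) : qbr r (s : ℂ) ≠ 0 := by
  intro h
  have hr : (r : ℂ) ≠ 0 := Nat.cast_ne_zero.2 (by omega)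
  obtain ⟨n, hn⟩ := qbr_eq_zero hr h
  have : (s : ℤ) = n * r := by exact_mod_cast hn
  have h1 : (0 : ℤ) < s := by exact_mod_cast hs
  have h2 : (s : ℤ) < r := by exact_mod_cast hsr
  rcases le_or_gt n 0 with h3 | h3
  · nlinarith
  · nlinarith

lemma hasDerivAt_expsub (c : ℂ) :
    HasDerivAt (fun ε : ℂ => Complex.exp (c * ε) - Complex.exp (-(c * ε))) (2 * c) 0 := by
  have e1 : HasDerivAt (fun ε : ℂ => c * ε) c 0 := by
    simpa using (hasDerivAt_id (0 : ℂ)).const_mul c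
  have h := (e1.cexp).sub (e1.neg.cexp)
  norm_num at h
  rw [show (2 : ℂ) * c = c + c by ring]
  exact h

set_option maxHeartbeats 1000000 in
lemma key_lim (r : ℕ) (hr : 0 < r) :
    Tendsto (fun ε : ℂ => qbr r ((r : ℂ) * ε) / qbr r ε) (nhdsWithin 0 {(0:ℂ)}ᶜ)
      (nhds (r : ℂ)) := by
  have hrc : (r : ℂ) ≠ 0 := Nat.cast_ne_zero.2 hr.ne'
  have hπI : (Real.pi : ℂ) * Complex.I ≠ 0 :=
    mul_ne_zero (Complex.ofReal_ne_zero.2 Real.pi_ne_zero) Complex.I_ne_zero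
  have f1 : (fun ε : ℂ => qbr r ((r : ℂ) * ε)) =
      fun ε : ℂ => Complex.exp ((Real.pi * Complex.I) * ε) - Complex.exp (-((Real.pi * Complex.I) * ε)) := by
    funext ε
    rw [qbr, qexp_r_mul r hrc, show -((r : ℂ) * ε) = (r : ℂ) * (-ε) by ring, qexp_r_mul r hrc]
    ring_nf
  have f2 : (fun ε : ℂ => qbr r ε) =
      fun ε : ℂ => Complex.exp ((Real.pi * Complex.I / r) * ε) - Complex.exp (-((Real.pi * Complex.I / r) * ε)) := by
    funext ε
    rw [qbr, qexp, qexp]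
    ring_nf
  have d1 : HasDerivAt (fun ε : ℂ => qbr r ((r : ℂ) * ε)) (2 * (Real.pi * Complex.I)) 0 := by
    rw [f1]; exact hasDerivAt_expsub _
  have d2 : HasDerivAt (fun ε : ℂ => qbr r ε) (2 * (Real.pi * Complex.I / r)) 0 := by
    rw [f2]; exact hasDerivAt_expsub _
  have t1 := hasDerivAt_iff_tendsto_slope.1 d1
  have t2 := hasDerivAt_iff_tendsto_slope.1 d2
  have hne : 2 * ((Real.pi : ℂ) * Complex.I / r) ≠ 0 := by
    apply mul_ne_zero (two_ne_zero) (div_ne_zero hπI hrc)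
  have hdiv := t1.div t2 hne
  have heq : (fun ε : ℂ => slope (fun ε : ℂ => qbr r ((r : ℂ) * ε)) 0 ε /
      slope (fun ε : ℂ => qbr r ε) 0 ε) =ᶠ[nhdsWithin 0 {(0:ℂ)}ᶜ]
      (fun ε : ℂ => qbr r ((r : ℂ) * ε) / qbr r ε) := by
    filter_upwards [self_mem_nhdsWithin] with ε hε
    have hε0 : (ε : ℂ) ≠ 0 := hε
    simp only [slope_def_field, qbr_zero, mul_zero, sub_zero, zero_sub, div_neg, neg_neg,
      neg_zero]
    rw [div_div_div_cancel_right₀ hε0]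
  have hlim : (2 * ((Real.pi : ℂ) * Complex.I)) / (2 * ((Real.pi : ℂ) * Complex.I / r)) = (r : ℂ) := by
    field_simp
  have := Tendsto.congr' heq hdiv
  rwa [hlim] at this

lemma qexp_neg_eq_inv (r : ℕ) (x : ℂ) : qexp r (-x) = (qexp r x)⁻¹ :=
  eq_inv_of_mul_eq_one_right (by rw [← qexp_add]; simp [qexp])

lemma qexp_nat_shift (r : ℕ) (hr : (r : ℂ) ≠ 0) (s : ℕ) (t : ℂ) :
    qexp r ((r : ℂ) * (s : ℂ) + t) = (-1 : ℂ) ^ s * qexp r t := by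
  rw [qexp_add, show ((s : ℕ) : ℂ) = (((s : ℤ)) : ℂ) by push_cast; ring, qexp_r_int r hr,
    zpow_natCast]

lemma qexp_neg_nat_shift (r : ℕ) (hr : (r : ℂ) ≠ 0) (s : ℕ) (t : ℂ) :
    qexp r (-((r : ℂ) * (s : ℂ)) + t) = (-1 : ℂ) ^ s * qexp r t := by
  rw [qexp_add, qexp_neg_eq_inv, show ((s : ℕ) : ℂ) = (((s : ℤ)) : ℂ) by push_cast; ring,
    qexp_r_int r hr, zpow_natCast]
  congr 1
  rcases Nat.even_or_odd s with h | h
  · simp [h.neg_one_pow]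
  · rw [h.neg_one_pow]; norm_num

lemma gP_continuousAt (r i : ℕ) {lam : ℂ} (h : qbr r lam ≠ 0) : ContinuousAt (gP r i) lam := by
  unfold gP
  apply ContinuousAt.mul
  · exact ContinuousAt.div
      (((continuous_qbr r).comp (continuous_const.mul continuous_id)).continuousAt)
      ((continuous_qbr r).continuousAt) h
  · exact (((continuous_qexp r).comp (continuous_const.mul continuous_id)).add
      ((continuous_qexp r).comp ((continuous_const.mul continuous_id).neg))).continuousAt


/-- The open Hopf link `Φ_{P_i,P_j}` is purely nilpotent: as `ε → 0`, `ε ≠ 0`,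
(i) `g(1+j−r+ε) → 0` and `g(r−1−j+ε) → 0`, and
(ii) `(−1/([1+j][ε]))(g(r−1−j+ε) − g(1+j−r+ε)) → (2r(−1)^i/[j+1]²)(q^{(i+1)(j+1)}+q^{−(i+1)(j+1)})`. -/
theorem stmt11 (r : ℕ) (hr : 2 ≤ r) (i j : ℕ) (hi : i ≤ r - 2) (hj : j ≤ r - 2) :
    Filter.Tendsto (fun ε : ℂ => gP r i (1 + (j : ℂ) - (r : ℂ) + ε))
      (nhdsWithin 0 {(0 : ℂ)}ᶜ) (nhds 0) ∧
    Filter.Tendsto (fun ε : ℂ => gP r i ((r : ℂ) - 1 - (j : ℂ) + ε))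
      (nhdsWithin 0 {(0 : ℂ)}ᶜ) (nhds 0) ∧
    Filter.Tendsto
      (fun ε : ℂ => (-1 / (qnum r (1 + (j : ℂ)) * qnum r ε))
        * (gP r i ((r : ℂ) - 1 - (j : ℂ) + ε) - gP r i (1 + (j : ℂ) - (r : ℂ) + ε)))
      (nhdsWithin 0 {(0 : ℂ)}ᶜ)
      (nhds ((2 * (r : ℂ) * (-1 : ℂ) ^ i / (qnum r ((j : ℂ) + 1)) ^ 2)
        * (qexp r (((i : ℂ) + 1) * ((j : ℂ) + 1))
            + qexp r (-(((i : ℂ) + 1) * ((j : ℂ) + 1)))))) := by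
  have hrc : (r : ℂ) ≠ 0 := Nat.cast_ne_zero.2 (by omega)
  set S : ℂ := (r : ℂ) - 1 - (j : ℂ) with hSdef
  set s : ℕ := r - 1 - j with hsdef
  have hsS : (s : ℂ) = S := by
    rw [hSdef, hsdef, Nat.cast_sub (by omega : j ≤ r - 1), Nat.cast_sub (by omega : 1 ≤ r)]
    push_cast; ring
  have hU : qbr r 1 ≠ 0 := by
    have := qbr_nat_ne_zero (r := r) (s := 1) one_pos (by omega)
    simpa using this
  have hV : qbr r S ≠ 0 := by
    rw [← hsS]; exact qbr_nat_ne_zero (by omega) (by omega)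
  have hVneg : qbr r (-S) ≠ 0 := by rw [qbr_neg]; exact neg_ne_zero.2 hV
  -- the key rewrites
  have hR : ∀ ε : ℂ, qbr r ((r : ℂ) * (S + ε)) = (-1 : ℂ) ^ s * qbr r ((r : ℂ) * ε) := by
    intro ε
    rw [qbr, qbr, show (r : ℂ) * (S + ε) = (r : ℂ) * (s : ℂ) + (r : ℂ) * ε by rw [hsS]; ring,
      qexp_nat_shift r hrc,
      show -((r : ℂ) * (s : ℂ) + (r : ℂ) * ε) = -((r : ℂ) * (s : ℂ)) + -((r : ℂ) * ε) by ring,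
      qexp_neg_nat_shift r hrc]
    ring
  have hR' : ∀ ε : ℂ, qbr r ((r : ℂ) * (-S + ε)) = (-1 : ℂ) ^ s * qbr r ((r : ℂ) * ε) := by
    intro ε
    rw [qbr, qbr, show (r : ℂ) * (-S + ε) = -((r : ℂ) * (s : ℂ)) + (r : ℂ) * ε by rw [hsS]; ring,
      qexp_neg_nat_shift r hrc,
      show -(-((r : ℂ) * (s : ℂ)) + (r : ℂ) * ε) = (r : ℂ) * (s : ℂ) + -((r : ℂ) * ε) by ring,
      qexp_nat_shift r hrc]
    ring
  have hj1 : qbr r (1 + (j : ℂ)) = qbr r S := by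
    rw [qbr, qbr, show (1 : ℂ) + (j : ℂ) = (r : ℂ) * ((1 : ℕ) : ℂ) + -S by rw [hSdef]; push_cast; ring,
      qexp_nat_shift r hrc,
      show -((r : ℂ) * ((1 : ℕ) : ℂ) + -S) = -((r : ℂ) * ((1 : ℕ) : ℂ)) + S by ring,
      qexp_neg_nat_shift r hrc]
    simp only [pow_one]
    ring
  -- gP vanishes at ±S
  have hq0 : qbr r ((r : ℂ) * S) = 0 := by
    have h0 := hR 0
    simpa [qbr_zero] using h0
  have hq0' : qbr r ((r : ℂ) * (-S)) = 0 := by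
    have h0 := hR' 0
    simpa [qbr_zero] using h0
  have hgS : gP r i S = 0 := by rw [gP, hq0]; simp
  have hgS' : gP r i (-S) = 0 := by rw [gP, hq0']; simp
  have targ1 : Tendsto (fun ε : ℂ => gP r i (1 + (j : ℂ) - (r : ℂ) + ε))
      (nhdsWithin 0 {(0 : ℂ)}ᶜ) (nhds 0) := by
    have harg : ∀ ε : ℂ, 1 + (j : ℂ) - (r : ℂ) + ε = -S + ε := by intro ε; rw [hSdef]; ring
    simp only [harg]
    have t : Tendsto (fun ε : ℂ => -S + ε) (nhds 0) (nhds (-S)) := by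
      simpa using Filter.Tendsto.const_add (-S) (continuous_id.tendsto (0 : ℂ))
    have := (gP_continuousAt r i hVneg).tendsto.comp t
    rw [hgS'] at this
    exact this.mono_left nhdsWithin_le_nhds
  have targ2 : Tendsto (fun ε : ℂ => gP r i (S + ε))
      (nhdsWithin 0 {(0 : ℂ)}ᶜ) (nhds 0) := by
    have t : Tendsto (fun ε : ℂ => S + ε) (nhds 0) (nhds S) := by
      simpa using Filter.Tendsto.const_add S (continuous_id.tendsto (0 : ℂ))
    have := (gP_continuousAt r i hV).tendsto.comp t
    rw [hgS] at this
    exact this.mono_left nhdsWithin_le_nhds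
  refine ⟨targ1, targ2, ?_⟩
  -- Part 3
  set m : ℤ := (r : ℤ) - 2 - (i : ℤ) - (j : ℤ) with hmdef
  have hevZ : ∀ᶠ ε : ℂ in nhds 0, qbr r (S + ε) ≠ 0 := by
    have hc : ContinuousAt (fun ε : ℂ => qbr r (S + ε)) 0 :=
      ((continuous_qbr r).comp (continuous_const.add continuous_id)).continuousAt
    exact hc.eventually_ne (by simpa using hV)
  have hevW : ∀ᶠ ε : ℂ in nhds 0, qbr r (S - ε) ≠ 0 := by
    have hc : ContinuousAt (fun ε : ℂ => qbr r (S - ε)) 0 :=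
      ((continuous_qbr r).comp (continuous_const.sub continuous_id)).continuousAt
    exact hc.eventually_ne (by simpa using hV)
  have hball : ∀ᶠ ε : ℂ in nhds 0, ‖ε‖ < 1 := by
    filter_upwards [Metric.ball_mem_nhds (0 : ℂ) one_pos] with ε hε
    simpa [dist_zero_right] using hε
  have hevY : ∀ᶠ ε : ℂ in nhdsWithin 0 {(0 : ℂ)}ᶜ, qbr r ε ≠ 0 := by
    filter_upwards [hball.filter_mono nhdsWithin_le_nhds, self_mem_nhdsWithin] with ε h1 h2
    intro h0
    obtain ⟨n, hn⟩ := qbr_eq_zero hrc h0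
    have hn0 : n ≠ 0 := by
      rintro rfl
      simp only [Int.cast_zero, zero_mul] at hn
      exact h2 hn
    have e1 : (1 : ℝ) ≤ ‖(n : ℂ)‖ := by
      rw [Complex.norm_intCast]
      exact_mod_cast Int.one_le_abs hn0
    have e2 : (2 : ℝ) ≤ ‖(r : ℂ)‖ := by
      rw [Complex.norm_natCast]; exact_mod_cast hr
    rw [hn, norm_mul] at h1
    nlinarith
  have heq : (fun ε : ℂ => (-1 / (qnum r (1 + (j : ℂ)) * qnum r ε))
        * (gP r i (S + ε) - gP r i (1 + (j : ℂ) - (r : ℂ) + ε)))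
      =ᶠ[nhdsWithin 0 {(0 : ℂ)}ᶜ]
      (fun ε : ℂ => (qbr r ((r : ℂ) * ε) / qbr r ε) *
        ((-1 : ℂ) ^ (s + 1) * (qbr r 1) ^ 2 / qbr r S *
          ((qexp r (((r : ℂ) - 1 - (i : ℂ)) * (S + ε)) + qexp r (-(((r : ℂ) - 1 - (i : ℂ)) * (S + ε)))) / qbr r (S + ε) +
           (qexp r (((r : ℂ) - 1 - (i : ℂ)) * (S - ε)) + qexp r (-(((r : ℂ) - 1 - (i : ℂ)) * (S - ε)))) / qbr r (S - ε)))) := by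
    filter_upwards [hevZ.filter_mono nhdsWithin_le_nhds, hevW.filter_mono nhdsWithin_le_nhds,
      hevY] with ε hZ hW hY
    have harg : 1 + (j : ℂ) - (r : ℂ) + ε = -S + ε := by rw [hSdef]; ring
    rw [harg]
    simp only [gP, qnum]
    rw [hR ε, hR' ε, hj1,
      show (-S + ε : ℂ) = -(S - ε) by ring, qbr_neg,
      show ((r : ℂ) - 1 - (i : ℂ)) * (-(S - ε)) = -(((r : ℂ) - 1 - (i : ℂ)) * (S - ε)) by ring,
      neg_neg]
    set U := qbr r 1 with hU1
    set V := qbr r S with hV1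
    set X := qbr r ((r : ℂ) * ε) with hX1
    set Y := qbr r ε with hY1
    set Z := qbr r (S + ε) with hZ1
    set W := qbr r (S - ε) with hW1
    set P := qexp r (((r : ℂ) - 1 - (i : ℂ)) * (S + ε)) with hP1
    set P' := qexp r (-(((r : ℂ) - 1 - (i : ℂ)) * (S + ε))) with hP2
    set Q := qexp r (((r : ℂ) - 1 - (i : ℂ)) * (S - ε)) with hQ1
    set Q' := qexp r (-(((r : ℂ) - 1 - (i : ℂ)) * (S - ε))) with hQ2
    field_simp
    ring
  have hch : ContinuousAt (fun ε : ℂ =>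
      (-1 : ℂ) ^ (s + 1) * (qbr r 1) ^ 2 / qbr r S *
        ((qexp r (((r : ℂ) - 1 - (i : ℂ)) * (S + ε)) + qexp r (-(((r : ℂ) - 1 - (i : ℂ)) * (S + ε)))) / qbr r (S + ε) +
         (qexp r (((r : ℂ) - 1 - (i : ℂ)) * (S - ε)) + qexp r (-(((r : ℂ) - 1 - (i : ℂ)) * (S - ε)))) / qbr r (S - ε))) 0 := by
    apply ContinuousAt.mul continuousAt_const
    apply ContinuousAt.add
    · apply ContinuousAt.div
      · exact (((continuous_qexp r).comp (continuous_const.mul (continuous_const.add continuous_id))).add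
          ((continuous_qexp r).comp ((continuous_const.mul (continuous_const.add continuous_id)).neg))).continuousAt
      · exact ((continuous_qbr r).comp (continuous_const.add continuous_id)).continuousAt
      · simpa using hV
    · apply ContinuousAt.div
      · exact (((continuous_qexp r).comp (continuous_const.mul (continuous_const.sub continuous_id))).add
          ((continuous_qexp r).comp ((continuous_const.mul (continuous_const.sub continuous_id)).neg))).continuousAt
      · exact ((continuous_qbr r).comp (continuous_const.sub continuous_id)).continuousAt
      · simpa using hV
  have hmain := (key_lim r (by omega)).mul
    (hch.tendsto.mono_left (nhdsWithin_le_nhds (s := {(0 : ℂ)}ᶜ)))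
  have hm : ((r : ℂ) - 1 - (i : ℂ)) * S = (r : ℂ) * ((m : ℤ) : ℂ) + ((i : ℂ) + 1) * ((j : ℂ) + 1) := by
    rw [hSdef, hmdef]; push_cast; ring
  have e1 : qexp r (((r : ℂ) - 1 - (i : ℂ)) * S)
      = (-1 : ℂ) ^ m * qexp r (((i : ℂ) + 1) * ((j : ℂ) + 1)) := by
    rw [hm, qexp_add, qexp_r_int r hrc]
  have e2 : qexp r (-(((r : ℂ) - 1 - (i : ℂ)) * S))
      = (-1 : ℂ) ^ m * qexp r (-(((i : ℂ) + 1) * ((j : ℂ) + 1))) := by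
    rw [hm, show -((r : ℂ) * ((m : ℤ) : ℂ) + ((i : ℂ) + 1) * ((j : ℂ) + 1))
        = (r : ℂ) * (((-m : ℤ) : ℤ) : ℂ) + -(((i : ℂ) + 1) * ((j : ℂ) + 1)) by push_cast; ring,
      qexp_add, qexp_r_int r hrc, zpow_neg]
    congr 1
    rcases Int.even_or_odd m with hpar | hpar
    · rw [hpar.neg_one_zpow]; norm_num
    · rw [hpar.neg_one_zpow]; norm_num
  have hsgn : (-1 : ℂ) ^ (s + 1) * (-1 : ℂ) ^ m = (-1 : ℂ) ^ i := by
    have hk : (((s + 1 : ℕ) : ℤ)) + m = (i : ℤ) + 2 * ((r : ℤ) - 1 - i - j) := by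
      rw [hmdef, hsdef]; push_cast; omega
    calc (-1 : ℂ) ^ (s + 1) * (-1 : ℂ) ^ m
        = (-1 : ℂ) ^ (((s + 1 : ℕ) : ℤ)) * (-1 : ℂ) ^ m := by rw [zpow_natCast]
      _ = (-1 : ℂ) ^ ((((s + 1 : ℕ) : ℤ)) + m) := (zpow_add₀ (by norm_num) _ _).symm
      _ = (-1 : ℂ) ^ ((i : ℤ) + 2 * ((r : ℤ) - 1 - i - j)) := by rw [hk]
      _ = (-1 : ℂ) ^ (i : ℤ) * ((-1 : ℂ) ^ (2 : ℤ)) ^ ((r : ℤ) - 1 - i - j) := by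
          rw [zpow_add₀ (by norm_num : (-1 : ℂ) ≠ 0), zpow_mul]
      _ = (-1 : ℂ) ^ i := by norm_num [zpow_natCast]
  have hq : qnum r ((j : ℂ) + 1) = qbr r S / qbr r 1 := by
    rw [qnum, show ((j : ℂ) + 1) = 1 + (j : ℂ) by ring, hj1]
  have hval : (2 * (r : ℂ) * (-1 : ℂ) ^ i / (qnum r ((j : ℂ) + 1)) ^ 2)
      * (qexp r (((i : ℂ) + 1) * ((j : ℂ) + 1)) + qexp r (-(((i : ℂ) + 1) * ((j : ℂ) + 1))))
      = (r : ℂ) * ((fun ε : ℂ =>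
      (-1 : ℂ) ^ (s + 1) * (qbr r 1) ^ 2 / qbr r S *
        ((qexp r (((r : ℂ) - 1 - (i : ℂ)) * (S + ε)) + qexp r (-(((r : ℂ) - 1 - (i : ℂ)) * (S + ε)))) / qbr r (S + ε) +
         (qexp r (((r : ℂ) - 1 - (i : ℂ)) * (S - ε)) + qexp r (-(((r : ℂ) - 1 - (i : ℂ)) * (S - ε)))) / qbr r (S - ε))) 0) := by
    simp only [add_zero, sub_zero]
    rw [hq, e1, e2, ← hsgn]
    set U := qbr r 1 with hU1
    set V := qbr r S with hV1
    set K1 := qexp r (((i : ℂ) + 1) * ((j : ℂ) + 1)) with hK1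
    set K2 := qexp r (-(((i : ℂ) + 1) * ((j : ℂ) + 1))) with hK2
    set σ := (-1 : ℂ) ^ (s + 1) with hσ1
    set τ := (-1 : ℂ) ^ m with hτ1
    field_simp
    ring
  rw [hval]
  exact Filter.Tendsto.congr' heq.symm hmain
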